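/- arXiv:2601.21395 — 2 statements merged into one kernel-verified Lean document; each statement's English description precedes it below -/
import Mathlib

section
/- Let n, m, ℓ be integers with n−1 ≥ m ≥ ℓ ≥ 1. Then Σ_{j=0}^{n−m−1} C(m−ℓ+2j, j) · 𝒴_n(2^{n−m−j−1}, 1^{m−ℓ+2j}) = (1/n²) · C(n, m) · C(n, ℓ). -/
open Finset

/-- The primitive n-th root of unity ζ_n = exp(2πi/n). -/
noncomputable def zetaN (n : ℕ) : ℂ := Complex.exp (2 * Real.pi * Complex.I / n)

/-- The finite q-multiple harmonic sum 𝔷_n(s_1,…,s_m) for a list of integer exponents: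
the sum over 1 ≤ i_1 < ⋯ < i_m ≤ n-1 of ∏_j (1 - ζ_n^{i_j})^{-s_j}. -/
noncomputable def qhs (n : ℕ) (s : List ℤ) : ℂ :=
  ∑ t ∈ (Finset.Icc 1 (n - 1)).powersetCard s.length,
    (List.zipWith (fun i e => (1 - zetaN n ^ i) ^ (-e)) (t.sort (· ≤ ·)) s).prod

/-- Sum of 𝔷_n(σ) over all distinct rearrangements σ of the list L of exponents. -/
noncomputable def Yperm (n : ℕ) (L : List ℤ) : ℂ :=
  ∑ σ ∈ L.permutations.toFinset, qhs n σ

/-- 𝒴_n(3^a, 2^b, 1^c): the sum of 𝔷_n(σ) over all distinct rearrangements of a string of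
a threes, b twos and c ones; interpreted as 0 if some block length is negative. -/
noncomputable def Y3 (n : ℕ) (a b c : ℤ) : ℂ :=
  if 0 ≤ a ∧ 0 ≤ b ∧ 0 ≤ c then
    Yperm n (List.replicate a.toNat 3 ++ List.replicate b.toNat 2 ++ List.replicate c.toNat 1)
  else 0

/-- Binomial coefficient C(a,b) for integers, interpreted as 0 when b < 0 or b > a. -/
def ichoose (a b : ℤ) : ℤ :=
  if 0 ≤ b ∧ b ≤ a then (a.toNat).choose b.toNat else 0


section Aux
open List

noncomputable def Pf (b c : ℕ) : Finset (List ℤ) :=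
  ((List.replicate b (2:ℤ) ++ List.replicate c 1).permutations).toFinset

lemma mem_Pf {b c : ℕ} {σ : List ℤ} :
    σ ∈ Pf b c ↔ σ ~ (List.replicate b (2:ℤ) ++ List.replicate c 1) := by
  simp [Pf, List.mem_permutations]

lemma perm_mid (b c : ℕ) :
    (List.replicate b (2:ℤ) ++ List.replicate (c+1) 1) ~ 1 :: (List.replicate b 2 ++ List.replicate c 1) := by
  rw [List.replicate_succ]
  exact List.perm_middle

lemma Pf_zero_left (c : ℕ) : Pf 0 (c+1) = (Pf 0 c).image (List.cons 1) := by
  ext σ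
  simp only [mem_Pf, List.replicate_zero, List.nil_append, List.perm_replicate, mem_image]
  constructor
  · rintro rfl
    exact ⟨List.replicate c 1, by simp [mem_Pf], List.replicate_succ.symm⟩
  · rintro ⟨τ, hτ, rfl⟩
    rw [hτ, List.replicate_succ]

lemma Pf_zero_right (b : ℕ) : Pf (b+1) 0 = (Pf b 0).image (List.cons 2) := by
  ext σ
  simp only [mem_Pf, List.replicate_zero, List.append_nil, List.perm_replicate, mem_image]
  constructor
  · rintro rfl
    exact ⟨List.replicate b 2, by simp [mem_Pf], List.replicate_succ.symm⟩
  · rintro ⟨τ, hτ, rfl⟩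
    rw [hτ, List.replicate_succ]

lemma Pf_split (b c : ℕ) :
    Pf (b+1) (c+1) = (Pf b (c+1)).image (List.cons 2) ∪ (Pf (b+1) c).image (List.cons 1) := by
  ext σ
  simp only [mem_Pf, mem_union, mem_image]
  constructor
  · intro h
    have hne : σ ≠ [] := by
      intro h0
      subst h0
      have := h.length_eq
      simp [List.replicate_succ] at this
    obtain ⟨a, τ, rfl⟩ := List.exists_cons_of_ne_nil hne
    have ha : a ∈ List.replicate (b+1) (2:ℤ) ++ List.replicate (c+1) 1 := h.mem_iff.mp (by simp)
    simp only [List.mem_append, List.mem_replicate] at ha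
    rcases ha with ⟨-, rfl⟩ | ⟨-, rfl⟩
    · left
      refine ⟨τ, ?_, rfl⟩
      have h2 : (2:ℤ) :: τ ~ 2 :: (List.replicate b 2 ++ List.replicate (c+1) 1) := by
        simpa [List.replicate_succ] using h
      exact (List.perm_cons 2).mp h2
    · right
      refine ⟨τ, ?_, rfl⟩
      exact (List.perm_cons 1).mp (h.trans (perm_mid (b+1) c))
  · rintro (⟨τ, hτ, rfl⟩ | ⟨τ, hτ, rfl⟩)
    · calc (2:ℤ) :: τ ~ 2 :: (List.replicate b 2 ++ List.replicate (c+1) 1) :=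
            (List.perm_cons 2).mpr hτ
        _ = List.replicate (b+1) 2 ++ List.replicate (c+1) 1 := by simp [List.replicate_succ]
    · exact ((List.perm_cons 1).mpr hτ).trans (perm_mid (b+1) c).symm

lemma Pf_zero_zero : Pf 0 0 = {[]} := by
  ext σ; simp [mem_Pf]

lemma sdiff_ins_ins {α : Type*} [DecidableEq α] {u S : Finset α} {i : α} (hiu : i ∉ u) :
    insert i u \ insert i S = u \ S := by
  ext x
  simp only [Finset.mem_sdiff, Finset.mem_insert, not_or]
  constructor
  · rintro ⟨(rfl | hx), hne, hS⟩
    · exact absurd rfl hne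
    · exact ⟨hx, hS⟩
  · rintro ⟨hx, hS⟩
    exact ⟨Or.inr hx, fun h => hiu (h ▸ hx), hS⟩

lemma key (g : ℕ → ℤ → ℂ) : ∀ (l : List ℕ), l.Nodup → ∀ b c : ℕ, l.length = b + c →
    ∑ σ ∈ Pf b c, (List.zipWith g l σ).prod
    = ∑ S ∈ l.toFinset.powersetCard b,
        (∏ i ∈ S, g i 2) * ∏ i ∈ l.toFinset \ S, g i 1 := by
  intro l
  induction l with
  | nil =>
    intro _ b c hlen
    simp only [List.length_nil] at hlen
    obtain ⟨rfl, rfl⟩ : b = 0 ∧ c = 0 := by omega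
    simp [Pf_zero_zero]
  | cons i l IH =>
    intro hnd b c hlen
    have hi : i ∉ l := by simp only [List.nodup_cons] at hnd; exact hnd.1
    have hnd' : l.Nodup := by simp only [List.nodup_cons] at hnd; exact hnd.2
    have hiF : i ∉ l.toFinset := by simpa using hi
    have hcard : l.toFinset.card = l.length := List.toFinset_card_of_nodup hnd'
    simp only [List.length_cons] at hlen
    have htF : (i :: l).toFinset = insert i l.toFinset := by simp
    have hinj2 : ∀ x ∈ Pf b (c+1), ∀ y ∈ Pf b (c+1), (2:ℤ) :: x = 2 :: y → x = y := by
      intro x _ y _ h; simpa using h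
    match b, c with
    | 0, 0 => omega
    | 0, c+1 =>
      rw [Pf_zero_left, Finset.sum_image (by intro x _ y _ h; simpa using h)]
      simp only [List.zipWith_cons_cons, List.prod_cons]
      rw [← Finset.mul_sum, IH hnd' 0 c (by omega), htF]
      simp [Finset.powersetCard_zero, Finset.mul_sum, Finset.prod_insert hiF,
        sdiff_ins_ins (S := (∅ : Finset ℕ)) hiF]
    | b+1, 0 =>
      rw [Pf_zero_right, Finset.sum_image (by intro x _ y _ h; simpa using h)]
      simp only [List.zipWith_cons_cons, List.prod_cons]
      rw [← Finset.mul_sum, IH hnd' b 0 (by omega), htF]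
      rw [Finset.powersetCard_succ_insert hiF]
      have hemp : l.toFinset.powersetCard (b+1) = ∅ := by
        rw [Finset.powersetCard_eq_empty]; omega
      rw [hemp, Finset.empty_union,
        Finset.sum_image (by
          intro x hx y hy h
          have hxi : i ∉ x := fun hh => hiF ((Finset.mem_powersetCard.mp hx).1 hh)
          have hyi : i ∉ y := fun hh => hiF ((Finset.mem_powersetCard.mp hy).1 hh)
          rw [← Finset.erase_insert hxi, h, Finset.erase_insert hyi])]
      rw [Finset.mul_sum]
      refine Finset.sum_congr rfl ?_
      intro S hS
      have hSu : S ⊆ l.toFinset := (Finset.mem_powersetCard.mp hS).1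
      have hiS : i ∉ S := fun hh => hiF (hSu hh)
      rw [Finset.prod_insert hiS, sdiff_ins_ins hiF]
      ring
    | b+1, c+1 =>
      rw [Pf_split]
      rw [Finset.sum_union (by
        simp only [Finset.disjoint_left, Finset.mem_image]
        rintro σ ⟨τ, -, rfl⟩ ⟨τ', -, h⟩
        simp at h)]
      rw [Finset.sum_image (by intro x _ y _ h; simpa using h),
        Finset.sum_image (by intro x _ y _ h; simpa using h)]
      simp only [List.zipWith_cons_cons, List.prod_cons]
      rw [← Finset.mul_sum, ← Finset.mul_sum, IH hnd' b (c+1) (by omega),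
        IH hnd' (b+1) c (by omega), htF, Finset.powersetCard_succ_insert hiF]
      rw [Finset.sum_union (by
        simp only [Finset.disjoint_left, Finset.mem_image, Finset.mem_powersetCard]
        rintro S ⟨hSu, -⟩ ⟨T, ⟨hTu, -⟩, rfl⟩
        exact hiF (hSu (Finset.mem_insert_self i T)))]
      rw [Finset.sum_image (by
        intro x hx y hy h
        have hxi : i ∉ x := fun hh => hiF ((Finset.mem_powersetCard.mp hx).1 hh)
        have hyi : i ∉ y := fun hh => hiF ((Finset.mem_powersetCard.mp hy).1 hh)
        rw [← Finset.erase_insert hxi, h, Finset.erase_insert hyi])]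
      rw [add_comm]
      congr 1
      · -- g i 1 * ∑_{S ∈ pC (b+1) u} ... = ∑_{S ∈ pC (b+1) u} ∏_S g2 * ∏_{insert i u \ S} g1
        rw [Finset.mul_sum]
        refine Finset.sum_congr rfl ?_
        intro S hS
        have hSu : S ⊆ l.toFinset := (Finset.mem_powersetCard.mp hS).1
        have hiS : i ∉ S := fun hh => hiF (hSu hh)
        rw [Finset.insert_sdiff_of_notMem _ hiS,
          Finset.prod_insert (fun hh => hiF (Finset.mem_sdiff.mp hh).1)]
        ring
      · rw [Finset.mul_sum]
        refine Finset.sum_congr rfl ?_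
        intro S hS
        have hSu : S ⊆ l.toFinset := (Finset.mem_powersetCard.mp hS).1
        have hiS : i ∉ S := fun hh => hiF (hSu hh)
        rw [Finset.prod_insert hiS, sdiff_ins_ins hiF]
        ring

end Aux

section Aux2

lemma chain {α : Type*} [DecidableEq α] (U : Finset α) (a k : ℕ) (F : Finset α → Finset α → ℂ) :
    ∑ t ∈ U.powersetCard (a + k), ∑ s ∈ t.powersetCard a, F s (t \ s)
    = ∑ s ∈ U.powersetCard a, ∑ r ∈ (U \ s).powersetCard k, F s r := by
  rw [Finset.sum_sigma', Finset.sum_sigma']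
  refine Finset.sum_nbij' (fun p => ⟨p.2, p.1 \ p.2⟩) (fun q => ⟨q.1 ∪ q.2, q.1⟩) ?_ ?_ ?_ ?_ ?_
  · rintro ⟨t, s⟩ hp
    simp only [Finset.mem_sigma, Finset.mem_powersetCard] at hp ⊢
    obtain ⟨⟨htU, htc⟩, hst, hsc⟩ := hp
    refine ⟨⟨hst.trans htU, hsc⟩, Finset.sdiff_subset_sdiff htU (le_refl _), ?_⟩
    rw [Finset.card_sdiff_of_subset hst, htc, hsc]; omega
  · rintro ⟨s, r⟩ hq
    simp only [Finset.mem_sigma, Finset.mem_powersetCard] at hq ⊢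
    obtain ⟨⟨hsU, hsc⟩, hrU, hrc⟩ := hq
    have hdis2 : Disjoint s r := Finset.disjoint_left.mpr fun x hxs hxr =>
      (Finset.mem_sdiff.mp (hrU hxr)).2 hxs
    refine ⟨⟨Finset.union_subset hsU (hrU.trans Finset.sdiff_subset), ?_⟩,
      Finset.subset_union_left, hsc⟩
    rw [Finset.card_union_of_disjoint hdis2, hsc, hrc]
  · rintro ⟨t, s⟩ hp
    simp only [Finset.mem_sigma, Finset.mem_powersetCard] at hp
    obtain ⟨-, hst, -⟩ := hp
    simp [Finset.union_sdiff_of_subset hst]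
  · rintro ⟨s, r⟩ hq
    simp only [Finset.mem_sigma, Finset.mem_powersetCard] at hq
    obtain ⟨-, hrU, -⟩ := hq
    have hdis2 : Disjoint s r := Finset.disjoint_left.mpr fun x hxs hxr =>
      (Finset.mem_sdiff.mp (hrU hxr)).2 hxs
    simp [Finset.union_sdiff_cancel_left hdis2]
  · rintro ⟨t, s⟩ _
    rfl

lemma split2 {α : Type*} [DecidableEq α] (P W : Finset α) (hd : Disjoint P W) (B : ℕ)
    (G : Finset α → ℂ) :
    ∑ Q ∈ (P ∪ W).powersetCard B, G Q
    = ∑ b ∈ Finset.range (B+1), ∑ S ∈ P.powersetCard b, ∑ T ∈ W.powersetCard (B - b),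
        G (S ∪ T) := by
  have h : ∑ Q ∈ (P ∪ W).powersetCard B, G Q
      = ∑ p ∈ (Finset.range (B+1)).sigma
          (fun b => (P.powersetCard b).sigma (fun _ => W.powersetCard (B - b))),
        G (p.2.1 ∪ p.2.2) := by
    refine Finset.sum_nbij' (fun Q => ⟨(Q ∩ P).card, (Q ∩ P), (Q ∩ W)⟩)
      (fun p => p.2.1 ∪ p.2.2) ?_ ?_ ?_ ?_ ?_
    · rintro Q hQ
      simp only [Finset.mem_powersetCard] at hQ
      obtain ⟨hQU, hQc⟩ := hQ
      have hsplit : (Q ∩ P) ∪ (Q ∩ W) = Q := by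
        rw [← Finset.inter_union_distrib_left, Finset.inter_eq_left.mpr hQU]
      have hdisQ : Disjoint (Q ∩ P) (Q ∩ W) :=
        hd.mono Finset.inter_subset_right Finset.inter_subset_right
      have hcard : (Q ∩ P).card + (Q ∩ W).card = B := by
        rw [← Finset.card_union_of_disjoint hdisQ, hsplit, hQc]
      simp only [Finset.mem_sigma, Finset.mem_powersetCard, Finset.mem_range]
      exact ⟨by omega, ⟨Finset.inter_subset_right, trivial⟩, Finset.inter_subset_right, by omega⟩
    · rintro ⟨b, S, T⟩ hp
      simp only [Finset.mem_sigma, Finset.mem_powersetCard, Finset.mem_range] at hp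
      obtain ⟨hb, ⟨hSP, hSc⟩, hTW, hTc⟩ := hp
      have hdisST : Disjoint S T := hd.mono hSP hTW
      simp only [Finset.mem_powersetCard]
      exact ⟨Finset.union_subset (hSP.trans Finset.subset_union_left)
        (hTW.trans Finset.subset_union_right),
        by rw [Finset.card_union_of_disjoint hdisST, hSc, hTc]; omega⟩
    · rintro Q hQ
      simp only [Finset.mem_powersetCard] at hQ
      show (Q ∩ P) ∪ (Q ∩ W) = Q
      rw [← Finset.inter_union_distrib_left, Finset.inter_eq_left.mpr hQ.1]
    · rintro ⟨b, S, T⟩ hp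
      simp only [Finset.mem_sigma, Finset.mem_powersetCard, Finset.mem_range] at hp
      obtain ⟨hb, ⟨hSP, hSc⟩, hTW, hTc⟩ := hp
      have hTP : Disjoint T P := (hd.symm.mono_left hTW)
      have hSW : Disjoint S W := hd.mono_left hSP
      have h1 : (S ∪ T) ∩ P = S := by
        rw [Finset.union_inter_distrib_right, Finset.inter_eq_left.mpr hSP,
          Finset.disjoint_iff_inter_eq_empty.mp hTP, Finset.union_empty]
      have h2 : (S ∪ T) ∩ W = T := by
        rw [Finset.union_inter_distrib_right, Finset.inter_eq_left.mpr hTW,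
          Finset.disjoint_iff_inter_eq_empty.mp hSW, Finset.empty_union]
      subst hSc
      simp [h1, h2]
    · rintro Q hQ
      simp only [Finset.mem_powersetCard] at hQ
      have : (Q ∩ P) ∪ (Q ∩ W) = Q := by
        rw [← Finset.inter_union_distrib_left, Finset.inter_eq_left.mpr hQ.1]
      show G Q = G ((Q ∩ P) ∪ (Q ∩ W))
      rw [this]
  rw [h, Finset.sum_sigma]
  exact Finset.sum_congr rfl fun b _ => by rw [Finset.sum_sigma]

lemma main_comb {α : Type*} [DecidableEq α] (U : Finset α) (y : α → ℂ) (A B : ℕ) (hBA : B ≤ A) :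
    ∑ b ∈ Finset.range (B+1), ((A+B-2*b).choose (A-b) : ℂ) *
        ∑ t ∈ U.powersetCard (A+B-b), ∑ S ∈ t.powersetCard b,
          (∏ i ∈ S, y i ^ 2) * ∏ i ∈ t \ S, y i
    = (∑ P ∈ U.powersetCard A, ∏ i ∈ P, y i) * (∑ Q ∈ U.powersetCard B, ∏ i ∈ Q, y i) := by
  have LHS_eq : ∀ b ∈ Finset.range (B+1),
      ((A+B-2*b).choose (A-b) : ℂ) *
        ∑ t ∈ U.powersetCard (A+B-b), ∑ S ∈ t.powersetCard b,
          (∏ i ∈ S, y i ^ 2) * ∏ i ∈ t \ S, y i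
      = ∑ S ∈ U.powersetCard b, ∑ T₁ ∈ (U \ S).powersetCard (A-b),
          ∑ T₂ ∈ ((U \ S) \ T₁).powersetCard (B-b),
            (∏ i ∈ S, y i ^ 2) * (∏ i ∈ T₁, y i) * ∏ i ∈ T₂, y i := by
    intro b hbr
    have hb : b ≤ B := by simpa using Nat.lt_succ_iff.mp (Finset.mem_range.mp hbr)
    rw [Finset.mul_sum]
    simp only [Finset.mul_sum]
    rw [show A+B-b = b + ((A-b)+(B-b)) by omega]
    rw [chain U b ((A-b)+(B-b))
      (fun s r => ((A+B-2*b).choose (A-b) : ℂ) * ((∏ i ∈ s, y i ^ 2) * ∏ i ∈ r, y i))]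
    refine Finset.sum_congr rfl fun S hS => ?_
    -- now: ∑ T ∈ (U\S).pC ((A-b)+(B-b)), C * (∏S y² * ∏T y) = ∑ T₁ ∑ T₂ ...
    rw [← chain (U \ S) (A-b) (B-b)
      (fun t₁ t₂ => (∏ i ∈ S, y i ^ 2) * (∏ i ∈ t₁, y i) * ∏ i ∈ t₂, y i)]
    refine Finset.sum_congr rfl fun T hT => ?_
    obtain ⟨hTU, hTc⟩ := Finset.mem_powersetCard.mp hT
    -- RHS: ∑ T₁ ∈ T.pC (A-b), ∏S y² * ∏T₁ y * ∏(T\T₁) y ; each term = ∏S y² * ∏T y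
    have hterm : ∀ T₁ ∈ T.powersetCard (A-b),
        (∏ i ∈ S, y i ^ 2) * (∏ i ∈ T₁, y i) * ∏ i ∈ T \ T₁, y i
        = (∏ i ∈ S, y i ^ 2) * ∏ i ∈ T, y i := by
      intro T₁ hT₁
      obtain ⟨hT₁T, -⟩ := Finset.mem_powersetCard.mp hT₁
      rw [mul_assoc, mul_comm (∏ i ∈ T₁, y i), Finset.prod_sdiff hT₁T]
    rw [Finset.sum_congr rfl hterm, Finset.sum_const, Finset.card_powersetCard, hTc,
      nsmul_eq_mul, show (A-b)+(B-b) = A+B-2*b by omega]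
  rw [Finset.sum_congr rfl LHS_eq]
  -- RHS transformation
  rw [Finset.sum_mul]
  have R1 : ∀ P ∈ U.powersetCard A,
      (∏ i ∈ P, y i) * ∑ Q ∈ U.powersetCard B, ∏ i ∈ Q, y i
      = ∑ b ∈ Finset.range (B+1), ∑ S ∈ P.powersetCard b,
          ∑ T₂ ∈ (U \ P).powersetCard (B-b), (∏ i ∈ P, y i) * ((∏ i ∈ S, y i) * ∏ i ∈ T₂, y i) := by
    intro P hP
    obtain ⟨hPU, hPc⟩ := Finset.mem_powersetCard.mp hP
    rw [Finset.mul_sum]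
    rw [show U.powersetCard B = (P ∪ (U \ P)).powersetCard B by
      rw [Finset.union_sdiff_of_subset hPU]]
    rw [split2 P (U \ P) Finset.disjoint_sdiff B (fun Q => (∏ i ∈ P, y i) * ∏ i ∈ Q, y i)]
    refine Finset.sum_congr rfl fun b _ => Finset.sum_congr rfl fun S hS =>
      Finset.sum_congr rfl fun T₂ hT₂ => ?_
    obtain ⟨hSP, -⟩ := Finset.mem_powersetCard.mp hS
    obtain ⟨hT₂, -⟩ := Finset.mem_powersetCard.mp hT₂
    have hdis : Disjoint S T₂ :=
      Finset.disjoint_sdiff.mono hSP hT₂ |>.symm.symm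
    rw [Finset.prod_union (Finset.disjoint_left.mpr fun x hxS hxT =>
      (Finset.mem_sdiff.mp (hT₂ hxT)).2 (hSP hxS))]
  rw [Finset.sum_congr rfl R1, Finset.sum_comm]
  refine Finset.sum_congr rfl fun b hbr => ?_
  have hb : b ≤ B := Nat.lt_succ_iff.mp (Finset.mem_range.mp hbr)
  rw [show U.powersetCard A = U.powersetCard (b + (A-b)) by rw [show b + (A-b) = A by omega]]
  rw [show (∑ P ∈ U.powersetCard (b + (A-b)), ∑ S ∈ P.powersetCard b,
        ∑ T₂ ∈ (U \ P).powersetCard (B-b), (∏ i ∈ P, y i) * ((∏ i ∈ S, y i) * ∏ i ∈ T₂, y i))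
      = ∑ P ∈ U.powersetCard (b + (A-b)), ∑ S ∈ P.powersetCard b,
        (fun s r => ∑ T₂ ∈ (U \ (s ∪ r)).powersetCard (B-b),
          ((∏ i ∈ s, y i) * ∏ i ∈ r, y i) * ((∏ i ∈ s, y i) * ∏ i ∈ T₂, y i)) S (P \ S) from ?_]
  · rw [chain U b (A-b) (fun s r => ∑ T₂ ∈ (U \ (s ∪ r)).powersetCard (B-b),
        ((∏ i ∈ s, y i) * ∏ i ∈ r, y i) * ((∏ i ∈ s, y i) * ∏ i ∈ T₂, y i))]
    refine Finset.sum_congr rfl fun S hS => Finset.sum_congr rfl fun T₁ hT₁ => ?_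
    obtain ⟨hSU, -⟩ := Finset.mem_powersetCard.mp hS
    obtain ⟨hT₁U, -⟩ := Finset.mem_powersetCard.mp hT₁
    have hUS : U \ (S ∪ T₁) = (U \ S) \ T₁ := by
      ext x; simp only [Finset.mem_sdiff, Finset.mem_union, not_or]; tauto
    rw [hUS]
    refine Finset.sum_congr rfl fun T₂ hT₂ => ?_
    rw [Finset.prod_pow]
    ring
  · refine Finset.sum_congr rfl fun P hP => Finset.sum_congr rfl fun S hS => ?_
    obtain ⟨hPU, hPc⟩ := Finset.mem_powersetCard.mp hP
    obtain ⟨hSP, hSc⟩ := Finset.mem_powersetCard.mp hS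
    simp only
    rw [Finset.union_sdiff_of_subset hSP]
    refine Finset.sum_congr rfl fun T₂ hT₂ => ?_
    rw [mul_comm (∏ i ∈ S, y i) (∏ i ∈ P \ S, y i), Finset.prod_sdiff hSP]

section Poly
open Polynomial

lemma zeta_prim {n : ℕ} (hn : 2 ≤ n) : IsPrimitiveRoot (zetaN n) n :=
  Complex.isPrimitiveRoot_exp n (by omega)

lemma x_ne_zero {n : ℕ} (hn : 2 ≤ n) {i : ℕ} (hi : i ∈ Finset.Icc 1 (n-1)) :
    (1 : ℂ) - zetaN n ^ i ≠ 0 := by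
  rw [Finset.mem_Icc] at hi
  have := (zeta_prim hn).pow_ne_one_of_pos_of_lt (by omega : i ≠ 0) (by omega : i < n)
  intro h
  exact this (by linear_combination -h)

lemma prod_poly {n : ℕ} (hn : 2 ≤ n) :
    (X : ℂ[X]) * ∏ i ∈ Finset.Icc 1 (n-1), (X + C (1 - zetaN n ^ i))
      = (X + 1) ^ n - 1 := by
  have h := X_pow_sub_C_eq_prod (zeta_prim hn) (by omega : 0 < n) (one_pow n)
  have h2 := congrArg (fun p => p.comp (X + 1)) h
  simp only [sub_comp, pow_comp, X_comp, C_comp, mul_one, C_1] at h2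
  rw [Polynomial.prod_comp, Polynomial.one_comp] at h2
  simp only [sub_comp, X_comp, C_comp, mul_one] at h2
  have hsplit : Finset.range n = insert 0 (Finset.Icc 1 (n-1)) := by
    ext x
    simp only [Finset.mem_range, Finset.mem_insert, Finset.mem_Icc]
    omega
  rw [hsplit, Finset.prod_insert (by simp), pow_zero] at h2
  rw [h2, show (X + 1 - C (1:ℂ)) = (X : ℂ[X]) by rw [C_1]; ring]
  refine congrArg (fun q : Polynomial ℂ => X * q) (Finset.prod_congr rfl fun i _ => ?_)
  rw [map_sub, map_one]
  ring

lemma esymm_x {n : ℕ} (hn : 2 ≤ n) {k : ℕ} (hk : k ≤ n - 1) :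
    ∑ t ∈ (Finset.Icc 1 (n-1)).powersetCard (n-1-k), ∏ i ∈ t, (1 - zetaN n ^ i)
      = (n.choose (k+1) : ℂ) := by
  have hcard : (Finset.Icc 1 (n-1)).card = n - 1 := by
    rw [Nat.card_Icc]; omega
  have h := prod_poly hn
  have hc := congrArg (fun p => p.coeff (k+1)) h
  simp only [coeff_X_mul] at hc
  rw [Finset.prod_X_add_C_coeff _ _ (by rw [hcard]; exact hk)] at hc
  rw [hcard] at hc
  rw [hc]
  rw [coeff_sub, coeff_X_add_one_pow, coeff_one]
  simp

lemma prod_x {n : ℕ} (hn : 2 ≤ n) :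
    ∏ i ∈ Finset.Icc 1 (n-1), (1 - zetaN n ^ i) = (n : ℂ) := by
  have h := esymm_x hn (k := 0) (by omega)
  have hcard : (Finset.Icc 1 (n-1)).card = n - 1 := by rw [Nat.card_Icc]; omega
  have h2 := Finset.powersetCard_self (Finset.Icc 1 (n-1))
  rw [hcard] at h2
  rw [Nat.sub_zero, h2, Finset.sum_singleton] at h
  simpa using h

lemma esymm_y {n : ℕ} (hn : 2 ≤ n) {d : ℕ} (hd : d ≤ n - 1) :
    ∑ t ∈ (Finset.Icc 1 (n-1)).powersetCard d, ∏ i ∈ t, (1 - zetaN n ^ i)⁻¹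
      = (n.choose (d+1) : ℂ) / n := by
  set I := Finset.Icc 1 (n-1) with hI
  have hcard : I.card = n - 1 := by rw [hI, Nat.card_Icc]; omega
  have hn0 : (n : ℂ) ≠ 0 := Nat.cast_ne_zero.mpr (by omega)
  have step : ∀ t ∈ I.powersetCard d,
      ∏ i ∈ t, (1 - zetaN n ^ i)⁻¹ = (∏ i ∈ I \ t, (1 - zetaN n ^ i)) / n := by
    intro t ht
    obtain ⟨htI, htc⟩ := Finset.mem_powersetCard.mp ht
    have hsplit : (∏ i ∈ I \ t, (1 - zetaN n ^ i)) * ∏ i ∈ t, (1 - zetaN n ^ i) = (n : ℂ) := by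
      rw [Finset.prod_sdiff htI, prod_x hn]
    have hne : ∏ i ∈ t, (1 - zetaN n ^ i) ≠ 0 :=
      Finset.prod_ne_zero_iff.mpr fun i hi => x_ne_zero hn (htI hi)
    rw [Finset.prod_inv_distrib, eq_div_iff hn0, inv_mul_eq_iff_eq_mul₀ hne, ← hsplit]
    ring
  rw [Finset.sum_congr rfl step, ← Finset.sum_div]
  have comp : ∑ t ∈ I.powersetCard d, ∏ i ∈ I \ t, (1 - zetaN n ^ i)
      = ∑ s ∈ I.powersetCard (n-1-d), ∏ i ∈ s, (1 - zetaN n ^ i) := by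
    refine Finset.sum_nbij' (fun t => I \ t) (fun s => I \ s) ?_ ?_ ?_ ?_ ?_
    · intro t ht
      obtain ⟨htI, htc⟩ := Finset.mem_powersetCard.mp ht
      rw [Finset.mem_powersetCard]
      exact ⟨Finset.sdiff_subset, by rw [Finset.card_sdiff_of_subset htI, hcard, htc]⟩
    · intro s hs
      obtain ⟨hsI, hsc⟩ := Finset.mem_powersetCard.mp hs
      rw [Finset.mem_powersetCard]
      exact ⟨Finset.sdiff_subset, by rw [Finset.card_sdiff_of_subset hsI, hcard, hsc]; omega⟩
    · intro t ht
      exact Finset.sdiff_sdiff_eq_self (Finset.mem_powersetCard.mp ht).1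
    · intro s hs
      exact Finset.sdiff_sdiff_eq_self (Finset.mem_powersetCard.mp hs).1
    · intro t ht
      rfl
  rw [comp, esymm_x hn hd]

end Poly

lemma Yperm_eval (n b c : ℕ) :
    Yperm n (List.replicate b 2 ++ List.replicate c 1)
    = ∑ t ∈ (Finset.Icc 1 (n-1)).powersetCard (b+c), ∑ S ∈ t.powersetCard b,
        (∏ i ∈ S, ((1 - zetaN n ^ i)⁻¹) ^ 2) * ∏ i ∈ t \ S, (1 - zetaN n ^ i)⁻¹ := by
  have h0 : Yperm n (List.replicate b 2 ++ List.replicate c 1) = ∑ σ ∈ Pf b c, qhs n σ := rfl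
  rw [h0]
  have hlen : ∀ σ ∈ Pf b c, σ.length = b + c := by
    intro σ hσ
    have := (mem_Pf.mp hσ).length_eq
    simpa using this
  have h1 : ∀ σ ∈ Pf b c, qhs n σ
      = ∑ t ∈ (Finset.Icc 1 (n-1)).powersetCard (b+c),
          (List.zipWith (fun i e => (1 - zetaN n ^ i) ^ (-e)) (t.sort (· ≤ ·)) σ).prod := by
    intro σ hσ
    rw [qhs, hlen σ hσ]
  rw [Finset.sum_congr rfl h1, Finset.sum_comm]
  refine Finset.sum_congr rfl fun t ht => ?_
  obtain ⟨htI, htc⟩ := Finset.mem_powersetCard.mp ht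
  have hnd : (t.sort (· ≤ ·)).Nodup := t.sort_nodup _
  have hlen2 : (t.sort (· ≤ ·)).length = b + c := by
    rw [Finset.length_sort]; exact htc
  rw [key (fun i e => (1 - zetaN n ^ i) ^ (-e)) (t.sort (· ≤ ·)) hnd b c hlen2,
    Finset.sort_toFinset]
  refine Finset.sum_congr rfl fun S hS => ?_
  congr 1
  · refine Finset.prod_congr rfl fun i _ => ?_
    rw [zpow_neg, show ((2:ℤ)) = ((2:ℕ):ℤ) from rfl, zpow_natCast, ← inv_pow]
  · refine Finset.prod_congr rfl fun i _ => ?_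
    rw [zpow_neg, zpow_one]

end Aux2

theorem stmt13 (n m ℓ : ℕ) (hℓ : 1 ≤ ℓ) (hml : ℓ ≤ m) (hm : m ≤ n - 1) :
    ∑ j ∈ Finset.range (n - m),
        ((m - ℓ + 2 * j).choose j : ℂ) * Y3 n 0 ((n : ℤ) - m - j - 1) ((m : ℤ) - ℓ + 2 * j)
      = 1 / (n : ℂ) ^ 2 * (n.choose m : ℂ) * (n.choose ℓ : ℂ) := by
  have hn : 2 ≤ n := by omega
  have hmain : ∑ b ∈ Finset.range ((n-1-m)+1),
      (((n-1-ℓ)+(n-1-m)-2*b).choose ((n-1-ℓ)-b) : ℂ) *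
        ∑ t ∈ (Finset.Icc 1 (n-1)).powersetCard ((n-1-ℓ)+(n-1-m)-b),
          ∑ S ∈ t.powersetCard b,
            (∏ i ∈ S, ((1 - zetaN n ^ i)⁻¹) ^ 2) * ∏ i ∈ t \ S, (1 - zetaN n ^ i)⁻¹
      = (∑ P ∈ (Finset.Icc 1 (n-1)).powersetCard (n-1-ℓ), ∏ i ∈ P, (1 - zetaN n ^ i)⁻¹)
        * (∑ Q ∈ (Finset.Icc 1 (n-1)).powersetCard (n-1-m), ∏ i ∈ Q, (1 - zetaN n ^ i)⁻¹) :=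
    main_comb (Finset.Icc 1 (n-1)) (fun i => (1 - zetaN n ^ i)⁻¹) (n-1-ℓ) (n-1-m) (by omega)
  rw [esymm_y hn (by omega : n-1-ℓ ≤ n-1), esymm_y hn (by omega : n-1-m ≤ n-1)] at hmain
  have hstep : ∑ j ∈ Finset.range (n - m),
        ((m - ℓ + 2 * j).choose j : ℂ) * Y3 n 0 ((n : ℤ) - m - j - 1) ((m : ℤ) - ℓ + 2 * j)
      = ∑ j ∈ Finset.range ((n-1-m)+1),
          (fun b => (((n-1-ℓ)+(n-1-m)-2*b).choose ((n-1-ℓ)-b) : ℂ) *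
            ∑ t ∈ (Finset.Icc 1 (n-1)).powersetCard ((n-1-ℓ)+(n-1-m)-b),
              ∑ S ∈ t.powersetCard b,
                (∏ i ∈ S, ((1 - zetaN n ^ i)⁻¹) ^ 2) * ∏ i ∈ t \ S, (1 - zetaN n ^ i)⁻¹)
            ((n-1-m)+1-1-j) := by
    rw [show n - m = (n-1-m)+1 by omega]
    refine Finset.sum_congr rfl fun j hj => ?_
    have hj' : j ≤ n-1-m := by
      have := Finset.mem_range.mp hj; omega
    simp only
    rw [show (n-1-m)+1-1-j = n-1-m-j by omega]
    have hY : Y3 n 0 ((n : ℤ) - m - j - 1) ((m : ℤ) - ℓ + 2 * j)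
        = Yperm n (List.replicate (n-1-m-j) 2 ++ List.replicate (m-ℓ+2*j) 1) := by
      rw [Y3, if_pos ⟨le_refl 0, by push_cast; omega, by push_cast; omega⟩]
      rw [show ((0:ℤ)).toNat = 0 from rfl, List.replicate_zero, List.nil_append]
      rw [show ((n : ℤ) - m - j - 1).toNat = n-1-m-j by omega,
        show ((m : ℤ) - ℓ + 2 * j).toNat = m-ℓ+2*j by omega]
    rw [hY, Yperm_eval]
    rw [show (n-1-m-j)+(m-ℓ+2*j) = (n-1-ℓ)+(n-1-m)-(n-1-m-j) by omega]
    congr 1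
    rw [show (n-1-ℓ)+(n-1-m)-2*(n-1-m-j) = m-ℓ+2*j by omega,
      show (n-1-ℓ)-(n-1-m-j) = (m-ℓ+2*j)-j by omega,
      Nat.choose_symm (by omega)]
  rw [hstep]
  refine (Finset.sum_range_reflect (fun b => (((n-1-ℓ)+(n-1-m)-2*b).choose ((n-1-ℓ)-b) : ℂ) *
    ∑ t ∈ (Finset.Icc 1 (n-1)).powersetCard ((n-1-ℓ)+(n-1-m)-b),
      ∑ S ∈ t.powersetCard b,
        (∏ i ∈ S, ((1 - zetaN n ^ i)⁻¹) ^ 2) * ∏ i ∈ t \ S, (1 - zetaN n ^ i)⁻¹)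
    ((n-1-m)+1)).trans ?_
  rw [hmain]
  rw [show (n-1-ℓ)+1 = n-ℓ by omega, show (n-1-m)+1 = n-m by omega,
    Nat.choose_symm (by omega : ℓ ≤ n), Nat.choose_symm (by omega : m ≤ n)]
  have hn0 : (n : ℂ) ≠ 0 := Nat.cast_ne_zero.mpr (by omega)
  field_simp
end

section
/- Let n ≥ 4 be an integer. Then the sum over all placements of a single exponent 1 among n−3 exponents 2 satisfies Σ_{k=1}^{n−2} 𝔷_n(2,…,2 (k−1 entries), 1, 2,…,2 (n−2−k entries)) = (n−1)/n; equivalently, 𝒴_n(2^{n−3}, 1^1) = (n−1)/n. -/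
open Finset

lemma zetaN_prim (n : ℕ) (hn : n ≠ 0) : IsPrimitiveRoot (zetaN n) n := by
  simpa [zetaN, mul_comm] using Complex.isPrimitiveRoot_exp n hn

lemma one_sub_ne (n : ℕ) (hn : 4 ≤ n) {j : ℕ} (hj : j ∈ Icc 1 (n-1)) :
    1 - zetaN n ^ j ≠ 0 := by
  rw [mem_Icc] at hj
  have := (zetaN_prim n (by omega)).pow_ne_one_of_pos_of_lt (by omega : j ≠ 0)
    (by omega : j < n)
  intro h
  exact this (by linear_combination -h)

lemma prodB (n : ℕ) (hn : 4 ≤ n) : ∏ j ∈ Icc 1 (n-1), (1 - zetaN n ^ j) = n := by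
  have h := (zetaN_prim n (by omega))
  obtain ⟨m, rfl⟩ : ∃ m, n = m + 1 := ⟨n-1, by omega⟩
  have := h.prod_one_sub_pow_eq_order
  push_cast
  rw [← this]
  rw [Finset.prod_bij' (fun k _ => k - 1) (fun k _ => k + 1)] <;> intros <;> simp_all <;> omega

lemma sumC (n : ℕ) (hn : 4 ≤ n) (c : ℕ) (hc1 : 1 ≤ c) (hc : c ≤ 3) :
    ∑ j ∈ Icc 1 (n-1), (zetaN n ^ c) ^ j = -1 := by
  have h := zetaN_prim n (by omega)
  have hne : zetaN n ^ c ≠ 1 := h.pow_ne_one_of_pos_of_lt (by omega) (by omega)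
  have hpow : (zetaN n ^ c) ^ n = 1 := by
    rw [← pow_mul, mul_comm, pow_mul, h.pow_eq_one, one_pow]
  have hgeom : ∑ j ∈ range n, (zetaN n ^ c) ^ j = 0 := by
    rw [geom_sum_eq hne, hpow, sub_self, zero_div]
  have : range n = insert 0 (Icc 1 (n-1)) := by
    ext j; simp [Finset.mem_Icc, Finset.mem_range]; omega
  rw [this, Finset.sum_insert (by simp)] at hgeom
  simp at hgeom
  linear_combination hgeom

lemma zip_rep (f : ℕ → ℤ → ℂ) : ∀ l : List ℕ,
    List.zipWith f l (List.replicate l.length 2) = l.map (f · 2) := by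
  intro l; induction l with
  | nil => rfl
  | cons x l ih => simp [List.replicate_succ, ih]

lemma key_s15 (f : ℕ → ℤ → ℂ) (h : ℕ → ℂ) (hf : ∀ x, f x 1 = f x 2 * h x) :
    ∀ l : List ℕ,
      ∑ k ∈ range l.length,
        (List.zipWith f l (List.replicate k 2 ++ 1 :: List.replicate (l.length - (k+1)) 2)).prod
      = (l.map (f · 2)).prod * (l.map h).sum := by
  intro l; induction l with
  | nil => simp
  | cons x l ih =>
    rw [List.length_cons, Finset.sum_range_succ']
    have h0 : (List.zipWith f (x :: l)
        (List.replicate 0 2 ++ 1 :: List.replicate (l.length + 1 - 1) 2)).prod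
        = f x 1 * (l.map (f · 2)).prod := by
      simp only [List.replicate, List.nil_append, List.zipWith_cons_cons, List.prod_cons,
        Nat.add_sub_cancel]
      rw [zip_rep]
    have hs : ∀ k ∈ range l.length, (List.zipWith f (x :: l)
        (List.replicate (k+1) 2 ++ 1 :: List.replicate (l.length + 1 - (k+1+1)) 2)).prod
        = f x 2 * (List.zipWith f l
            (List.replicate k 2 ++ 1 :: List.replicate (l.length - (k+1)) 2)).prod := by
      intro k hk
      rw [List.replicate_succ, List.cons_append, List.zipWith_cons_cons, List.prod_cons,
        show l.length + 1 - (k+1+1) = l.length - (k+1) by omega]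
    rw [Finset.sum_congr rfl hs, ← Finset.mul_sum, ih, h0, hf]
    simp
    ring

lemma pows_eq_image (S : Finset ℕ) (hS : S.Nonempty) :
    S.powersetCard (S.card - 1) = S.image (fun j => S.erase j) := by
  ext t
  simp only [Finset.mem_powersetCard, Finset.mem_image]
  constructor
  · rintro ⟨hsub, hcard⟩
    have hlt : t.card < S.card := by
      have := Finset.card_pos.mpr hS
      omega
    obtain ⟨j, hjS, hjt⟩ := Finset.exists_of_ssubset (Finset.ssubset_iff_subset_ne.mpr
      ⟨hsub, fun h => by rw [h] at hlt; omega⟩)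
    refine ⟨j, hjS, (Finset.eq_of_subset_of_card_le ?_ ?_).symm⟩
    · intro x hx
      exact Finset.mem_erase.mpr ⟨fun h => hjt (h ▸ hx), hsub hx⟩
    · rw [Finset.card_erase_of_mem hjS]; omega
  · rintro ⟨j, hj, rfl⟩
    exact ⟨Finset.erase_subset _ _, by rw [Finset.card_erase_of_mem hj]⟩

lemma part1 (n : ℕ) (hn : 4 ≤ n) :
    (∑ k ∈ Finset.Icc 1 (n - 2),
        qhs n (List.replicate (k - 1) 2 ++ [1] ++ List.replicate (n - 2 - k) 2))
      = ((n : ℂ) - 1) / n := by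
  set ζ := zetaN n with hζ
  set S := Icc 1 (n-1) with hS
  set f : ℕ → ℤ → ℂ := fun i e => (1 - ζ ^ i) ^ (-e) with hf
  set g : ℕ → ℂ := fun i => ((1 - ζ ^ i) ^ 2)⁻¹ with hg
  set h : ℕ → ℂ := fun i => 1 - ζ ^ i with hh
  have hcardS : S.card = n - 1 := by rw [hS, Nat.card_Icc]; omega
  have hfg : ∀ i, f i 2 = g i := by
    intro i; simp only [hf, hg]
    rw [show (-(2:ℤ)) = -(2:ℕ) by norm_num, zpow_neg, zpow_natCast]
  have hf1 : ∀ x, f x 1 = f x 2 * h x := by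
    intro x
    simp only [hf, hh]
    rcases eq_or_ne (1 - ζ ^ x) 0 with h0 | h0
    · rw [h0]; norm_num
    · rw [show (-(1:ℤ)) = -2 + 1 by norm_num, zpow_add_one₀ h0]
  -- step 1&2: rewrite each qhs and swap sums
  have step1 : ∀ k ∈ Icc 1 (n-2),
      qhs n (List.replicate (k - 1) 2 ++ [1] ++ List.replicate (n - 2 - k) 2)
      = ∑ t ∈ S.powersetCard (n-2),
          (List.zipWith f (t.sort (· ≤ ·))
            (List.replicate (k - 1) 2 ++ [1] ++ List.replicate (n - 2 - k) 2)).prod := by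
    intro k hk
    rw [mem_Icc] at hk
    have hlen : (List.replicate (k - 1) (2:ℤ) ++ [1] ++ List.replicate (n - 2 - k) 2).length
      = n - 2 := by simp; omega
    rw [qhs, hlen]
  rw [Finset.sum_congr rfl step1, Finset.sum_comm]
  -- step 3: inner sum via key lemma
  have step3 : ∀ t ∈ S.powersetCard (n-2),
      (∑ k ∈ Icc 1 (n-2), (List.zipWith f (t.sort (· ≤ ·))
          (List.replicate (k - 1) 2 ++ [1] ++ List.replicate (n - 2 - k) 2)).prod)
      = (∏ i ∈ t, g i) * (∑ i ∈ t, h i) := by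
    intro t ht
    rw [Finset.mem_powersetCard] at ht
    set l := t.sort (· ≤ ·) with hl
    have hlen : l.length = n - 2 := by rw [hl, Finset.length_sort, ht.2]
    have reidx : (∑ k ∈ Icc 1 (n-2), (List.zipWith f l
          (List.replicate (k - 1) 2 ++ [1] ++ List.replicate (n - 2 - k) 2)).prod)
        = ∑ j ∈ range l.length, (List.zipWith f l
          (List.replicate j 2 ++ 1 :: List.replicate (l.length - (j+1)) 2)).prod := by
      refine Finset.sum_bij' (fun k _ => k - 1) (fun j _ => j + 1) ?_ ?_ ?_ ?_ ?_
      · intro k hk; rw [mem_Icc] at hk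
        show k - 1 ∈ range l.length
        rw [mem_range]; omega
      · intro j hj; rw [mem_range] at hj
        show j + 1 ∈ Icc 1 (n-2)
        rw [mem_Icc]; omega
      · intro k hk; rw [mem_Icc] at hk
        show k - 1 + 1 = k
        omega
      · intro j hj
        show j + 1 - 1 = j
        omega
      · intro k hk
        rw [mem_Icc] at hk
        show _ = (List.zipWith f l
          (List.replicate (k-1) 2 ++ 1 :: List.replicate (l.length - (k-1+1)) 2)).prod
        congr 2
        rw [List.append_assoc, List.singleton_append]
        rw [show l.length - (k - 1 + 1) = n - 2 - k by omega]
    rw [reidx, key_s15 f h hf1 l]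
    congr 1
    · rw [← Finset.prod_map_toList]
      have := (Finset.sort_perm_toList t (· ≤ ·)).map (f · 2)
      rw [this.prod_eq]
      simp only [hfg]
    · rw [← Finset.sum_map_toList]
      exact ((Finset.sort_perm_toList t (· ≤ ·)).map h).sum_eq
  rw [Finset.sum_congr rfl step3]
  -- step 5: powersetCard as image of erase
  have hSne : S.Nonempty := ⟨1, by rw [hS, mem_Icc]; omega⟩
  rw [show n - 2 = S.card - 1 by omega, pows_eq_image S hSne,
    Finset.sum_image (fun a ha b hb hab => by
      by_contra hne
      have h2 : a ∈ S.erase b := Finset.mem_erase.mpr ⟨hne, ha⟩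
      rw [← hab] at h2
      exact (Finset.mem_erase.mp h2).1 rfl)]
  -- step 6: evaluate per j
  have hn0 : (n:ℂ) ≠ 0 := by
    simp only [ne_eq, Nat.cast_eq_zero]; omega
  have prodS : ∏ i ∈ S, g i = ((n:ℂ)^2)⁻¹ := by
    show ∏ i ∈ S, ((1 - ζ ^ i) ^ 2)⁻¹ = ((n:ℂ)^2)⁻¹
    rw [Finset.prod_inv_distrib, Finset.prod_pow, hS, prodB n hn]
  have s1 : ∑ j ∈ S, ζ ^ j = -1 := by
    rw [hS, hζ]; simpa using sumC n hn 1 le_rfl (by norm_num)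
  have s2 : ∑ j ∈ S, (ζ ^ 2) ^ j = -1 := by
    rw [hS, hζ]; exact sumC n hn 2 (by norm_num) (by norm_num)
  have s3 : ∑ j ∈ S, (ζ ^ 3) ^ j = -1 := by
    rw [hS, hζ]; exact sumC n hn 3 (by norm_num) (by norm_num)
  have hc : ((S.card : ℂ)) = (n : ℂ) - 1 := by
    rw [hcardS]; push_cast [Nat.cast_sub (by omega : 1 ≤ n)]; ring
  have sumS : ∑ i ∈ S, h i = n := by
    show ∑ i ∈ S, (1 - ζ ^ i) = n
    rw [Finset.sum_sub_distrib, Finset.sum_const, s1, nsmul_eq_mul]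
    rw [show ((S.card : ℂ)) = (n : ℂ) - 1 from hc]
    ring
  have herase : ∀ j ∈ S, (∏ i ∈ S.erase j, g i) * (∑ i ∈ S.erase j, h i)
      = ((n:ℂ)^2)⁻¹ * (((n:ℂ)-1) + (3-2*(n:ℂ))*ζ^j + ((n:ℂ)-3)*(ζ^2)^j + (ζ^3)^j) := by
    intro j hj
    have hjne : 1 - ζ ^ j ≠ 0 := by
      rw [hζ]
      exact one_sub_ne n hn (by rw [← hS]; exact hj)
    have hprod : ∏ i ∈ S.erase j, g i = (1-ζ^j)^2 * ((n:ℂ)^2)⁻¹ := by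
      have hmul := Finset.mul_prod_erase S g hj
      rw [prodS] at hmul
      calc ∏ i ∈ S.erase j, g i
          = ((1-ζ^j)^2 * ((1-ζ^j)^2)⁻¹) * ∏ i ∈ S.erase j, g i := by
            rw [mul_inv_cancel₀ (pow_ne_zero 2 hjne), one_mul]
        _ = (1-ζ^j)^2 * (g j * ∏ i ∈ S.erase j, g i) := by
            show _ = (1-ζ^j)^2 * (((1-ζ^j)^2)⁻¹ * _)
            ring
        _ = (1-ζ^j)^2 * ((n:ℂ)^2)⁻¹ := by rw [hmul]
    have hsum : ∑ i ∈ S.erase j, h i = (n:ℂ) - (1-ζ^j) := by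
      have hadd := Finset.add_sum_erase S h hj
      rw [sumS] at hadd
      have : h j = 1 - ζ ^ j := rfl
      linear_combination hadd - this
    rw [hprod, hsum, pow_right_comm ζ 2 j, pow_right_comm ζ 3 j]
    ring
  rw [Finset.sum_congr rfl herase, ← Finset.mul_sum]
  rw [Finset.sum_add_distrib, Finset.sum_add_distrib, Finset.sum_add_distrib,
    ← Finset.mul_sum, ← Finset.mul_sum, Finset.sum_const, s1, s2, s3, nsmul_eq_mul, hc]
  field_simp
  ring

lemma perm_rep : ∀ (σ : List ℤ) (b : ℕ), σ.Perm (List.replicate b 2 ++ [1]) →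
    ∃ j, j ≤ b ∧ σ = List.replicate j 2 ++ 1 :: List.replicate (b - j) 2 := by
  intro σ
  induction σ with
  | nil =>
    intro b h
    have := h.length_eq
    simp at this
  | cons x rest ih =>
    intro b h
    have hx : x ∈ List.replicate b (2:ℤ) ++ [1] := h.subset List.mem_cons_self
    have hmid : (List.replicate b (2:ℤ) ++ [1]).Perm (1 :: List.replicate b 2) := by
      have := List.perm_middle (a := (1:ℤ)) (l₁ := List.replicate b (2:ℤ)) (l₂ := [])
      simpa using this
    rcases List.mem_append.mp hx with h2 | h1
    · -- x = 2
      have hx2 : x = 2 := (List.eq_of_mem_replicate h2)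
      subst hx2
      obtain ⟨b', rfl⟩ : ∃ b', b = b' + 1 := by
        rcases Nat.eq_zero_or_pos b with rfl | hb
        · exfalso
          have : (2:ℤ) ∈ ([1] : List ℤ) := by
            have := h.subset List.mem_cons_self
            simpa using this
          simp at this
        · exact ⟨b - 1, by omega⟩
      rw [List.replicate_succ, List.cons_append] at h
      have hrest := h.cons_inv
      obtain ⟨j, hj, hrw⟩ := ih b' hrest
      exact ⟨j + 1, by omega, by
        rw [List.replicate_succ, List.cons_append, hrw,
          show b' + 1 - (j+1) = b' - j by omega]⟩
    · -- x = 1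
      have hx1 : x = 1 := by simpa using h1
      subst hx1
      have hrest : rest.Perm (List.replicate b 2) := (h.trans hmid).cons_inv
      have := List.perm_replicate.mp hrest
      exact ⟨0, Nat.zero_le b, by simp [this]⟩

lemma rep_perm (b j : ℕ) (hj : j ≤ b) :
    (List.replicate j (2:ℤ) ++ 1 :: List.replicate (b - j) 2).Perm
      (List.replicate b 2 ++ [1]) := by
  have h1 : (List.replicate j (2:ℤ) ++ 1 :: List.replicate (b - j) 2).Perm
      (1 :: (List.replicate j (2:ℤ) ++ List.replicate (b - j) 2)) := List.perm_middle
  have h2 : List.replicate j (2:ℤ) ++ List.replicate (b - j) 2 = List.replicate b 2 := by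
    rw [← List.replicate_add, show j + (b - j) = b by omega]
  have h3 : (List.replicate b (2:ℤ) ++ [1]).Perm (1 :: List.replicate b 2) := by
    have := List.perm_middle (a := (1:ℤ)) (l₁ := List.replicate b (2:ℤ)) (l₂ := [])
    simpa using this
  rw [h2] at h1
  exact h1.trans h3.symm

lemma rep_one_inj : ∀ (j j' : ℕ) (u u' : List ℤ),
    List.replicate j 2 ++ 1 :: u = List.replicate j' 2 ++ 1 :: u' → j = j' := by
  intro j
  induction j with
  | zero =>
    intro j' u u' h
    cases j' with
    | zero => rfl
    | succ j' => rw [List.replicate_succ] at h; simp at h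
  | succ j ih =>
    intro j' u u' h
    cases j' with
    | zero => rw [List.replicate_succ] at h; simp at h
    | succ j' =>
      rw [List.replicate_succ, List.replicate_succ, List.cons_append, List.cons_append] at h
      simp only [List.cons.injEq] at h
      exact congrArg Nat.succ (ih j' u u' h.2)

theorem stmt15 (n : ℕ) (hn : 4 ≤ n) :
    (∑ k ∈ Finset.Icc 1 (n - 2),
        qhs n (List.replicate (k - 1) 2 ++ [1] ++ List.replicate (n - 2 - k) 2))
      = ((n : ℂ) - 1) / n
    ∧ Y3 n 0 ((n : ℤ) - 3) 1 = ((n : ℂ) - 1) / n := by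
  have hp1 := part1 n hn
  refine ⟨hp1, ?_⟩
  rw [Y3, if_pos ⟨le_rfl, by omega, by norm_num⟩]
  have h0 : ((0:ℤ)).toNat = 0 := rfl
  have h1 : ((1:ℤ)).toNat = 1 := rfl
  have h3 : (((n:ℤ) - 3)).toNat = n - 3 := by omega
  rw [h0, h1, h3]
  simp only [List.replicate_zero, List.replicate_one, List.nil_append]
  rw [Yperm]
  have hset : (List.replicate (n-3) (2:ℤ) ++ [1]).permutations.toFinset
      = (Icc 1 (n-2)).image
          (fun k => List.replicate (k-1) (2:ℤ) ++ [1] ++ List.replicate (n-2-k) 2) := by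
    ext σ
    simp only [List.mem_toFinset, List.mem_permutations, Finset.mem_image, mem_Icc]
    constructor
    · intro hperm
      obtain ⟨j, hj, rfl⟩ := perm_rep σ (n-3) hperm
      refine ⟨j+1, ⟨by omega, by omega⟩, ?_⟩
      rw [List.append_assoc, List.singleton_append,
        show j + 1 - 1 = j by omega, show n - 2 - (j+1) = n - 3 - j by omega]
    · rintro ⟨k, ⟨hk1, hk2⟩, rfl⟩
      rw [List.append_assoc, List.singleton_append,
        show n - 2 - k = (n-3) - (k-1) by omega]
      exact rep_perm (n-3) (k-1) (by omega)
  rw [hset, Finset.sum_image ?inj]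
  · exact hp1
  case inj =>
    intro x hx y hy hxy
    rw [Finset.mem_coe, mem_Icc] at hx hy
    beta_reduce at hxy
    rw [List.append_assoc, List.singleton_append, List.append_assoc,
      List.singleton_append] at hxy
    have := rep_one_inj (x-1) (y-1) _ _ hxy
    omega
end
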